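/- arXiv:1409.6403 — 2 statements merged into one kernel-verified Lean document; each statement's English description precedes it below -/
import Mathlib

section
/- The first-order rogue wave φ₁(x,t) = e^{2it}·(1 − 4(1+4it)/(1 + 4(x − 1/2 − 6vt)² + 16t²)) satisfies the Hirota equation i·φ_t + φ_{xx} + 2|φ|²φ + i·v·φ_{xxx} + 6i·v·|φ|²·φ_x = 0 for every real v. -/
open Complex

noncomputable def dx (φ : ℝ → ℝ → ℂ) : ℝ → ℝ → ℂ := fun x t => deriv (fun y => φ y t) x
noncomputable def dt (φ : ℝ → ℝ → ℂ) : ℝ → ℝ → ℂ := fun x t => deriv (fun s => φ x s) t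

/-- The first-order rogue wave of the Hirota equation. -/
noncomputable def φ₁ (v : ℝ) : ℝ → ℝ → ℂ := fun x t =>
  Complex.exp (2 * I * t) *
    (1 - 4 * (1 + 4 * I * t) / (1 + 4 * ((x : ℂ) - 1/2 - 6 * v * t)^2 + 16 * t^2))

/-!
The rogue wave is the Peregrine breather `P(ξ, t) = e^{2it} (1 - 4 (1 + 4it) / (1 + 4ξ² + 16t²))`
of the focusing NLS equation `i P_t + P_ξξ + 2|P|² P = 0`, seen in the frame `ξ = x - 1/2 - 6vt`.
The Hirota operator is the NLS operator plus `i v` times the complex mKdV operator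
`φ_xxx + 6|φ|² φ_x`, and passing to the moving frame adds `-6iv P_ξ`. So it suffices that
`P_ξξξ + 6|P|² P_ξ = 6 P_ξ`, i.e. that the mKdV flow moves the breather rigidly at speed 6.
Both identities for `P` are identities between rational functions.
-/

open ComplexConjugate Function

section MovingFrame

variable (F : ℝ → ℝ → ℂ) (s : ℝ → ℝ)

theorem dx_comp_sub : dx (fun x t => F (x - s t) t) = fun x t => dx F (x - s t) t := by
  funext x t
  exact deriv_comp_sub_const (f := fun y => F y t) (s t) x

theorem dt_comp_sub {x t s' : ℝ} (hF : DifferentiableAt ℝ (uncurry F) (x - s t, t))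
    (hs : HasDerivAt s s' t) :
    dt (fun x t => F (x - s t) t) x t = dt F (x - s t) t - s' * dx F (x - s t) t := by
  set L := fderiv ℝ (uncurry F) (x - s t, t)
  have hx : dx F (x - s t) t = L (1, 0) :=
    (hF.hasFDerivAt.comp_hasDerivAt_of_eq (x - s t)
      ((hasDerivAt_id _).prodMk (hasDerivAt_const _ t)) rfl).deriv
  have ht : dt F (x - s t) t = L (0, 1) :=
    (hF.hasFDerivAt.comp_hasDerivAt_of_eq t
      ((hasDerivAt_const _ (x - s t)).prodMk (hasDerivAt_id t)) rfl).deriv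
  have hmove : dt (fun x t => F (x - s t) t) x t = L (0 - s', 1) :=
    (hF.hasFDerivAt.comp_hasDerivAt_of_eq t
      (((hasDerivAt_const _ x).sub hs).prodMk (hasDerivAt_id t)) rfl).deriv
  have hdir : ((0 - s', 1) : ℝ × ℝ) = (0, 1) - s' • (1, 0) := by ext <;> simp
  rw [hmove, hx, ht, hdir, map_sub, map_smul, Complex.real_smul]

end MovingFrame

noncomputable def nlsOperator (φ : ℝ → ℝ → ℂ) (x t : ℝ) : ℂ :=
  I * dt φ x t + dx (dx φ) x t + 2 * (‖φ x t‖ : ℂ) ^ 2 * φ x t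

noncomputable def mkdvOperator (φ : ℝ → ℝ → ℂ) (x t : ℝ) : ℂ :=
  dx (dx (dx φ)) x t + 6 * (‖φ x t‖ : ℂ) ^ 2 * dx φ x t

noncomputable def hirotaOperator (v : ℝ) (φ : ℝ → ℝ → ℂ) (x t : ℝ) : ℂ :=
  I * dt φ x t + dx (dx φ) x t + 2 * (‖φ x t‖ : ℂ) ^ 2 * φ x t
    + I * v * dx (dx (dx φ)) x t + 6 * I * v * (‖φ x t‖ : ℂ) ^ 2 * dx φ x t

theorem hirotaOperator_eq_nls_add_mkdv (v : ℝ) (φ : ℝ → ℝ → ℂ) (x t : ℝ) :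
    hirotaOperator v φ x t = nlsOperator φ x t + I * v * mkdvOperator φ x t := by
  unfold hirotaOperator nlsOperator mkdvOperator
  ring

theorem hirotaOperator_comp_sub_eq_zero {u : ℝ → ℝ → ℂ} {s : ℝ → ℝ} {c v : ℝ}
    (hu : Differentiable ℝ (uncurry u)) (hs : ∀ t, HasDerivAt s (c * v) t)
    (hnls : ∀ ξ t, nlsOperator u ξ t = 0)
    (hmkdv : ∀ ξ t, mkdvOperator u ξ t = c * dx u ξ t)
    (x t : ℝ) : hirotaOperator v (fun x t => u (x - s t) t) x t = 0 := by
  have hn := hnls (x - s t) t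
  have hm := hmkdv (x - s t) t
  simp only [nlsOperator, mkdvOperator] at hn hm
  simp only [hirotaOperator_eq_nls_add_mkdv, nlsOperator, mkdvOperator, dx_comp_sub,
    dt_comp_sub u s (hu _) (hs t)]
  push_cast
  linear_combination hn + I * v * hm

-- Complex arguments, so that derivatives in `ξ` and `t` come from complex calculus restricted to `ℝ`.
def peregrineDen (w s : ℂ) : ℂ := 1 + 4 * w ^ 2 + 16 * s ^ 2

noncomputable def peregrine : ℝ → ℝ → ℂ := fun ξ t =>
  exp (2 * I * t) * (1 - 4 * (1 + 4 * I * t) / peregrineDen ξ t)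

theorem peregrineDen_ofReal_ne_zero (ξ t : ℝ) : peregrineDen ξ t ≠ 0 := by
  unfold peregrineDen
  exact_mod_cast (by positivity : (1 + 4 * ξ ^ 2 + 16 * t ^ 2 : ℝ) ≠ 0)

theorem differentiable_uncurry_peregrine : Differentiable ℝ (uncurry peregrine) := by
  rintro ⟨ξ, t⟩
  have hD := peregrineDen_ofReal_ne_zero ξ t
  simp only [peregrine, peregrineDen, uncurry_def, div_eq_mul_inv] at hD ⊢
  fun_prop (disch := simpa using hD)

section
variable {w s : ℂ}

theorem hasDerivAt_peregrineDen_left : HasDerivAt (peregrineDen · s) (8 * w) w := by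
  refine (((hasDerivAt_pow 2 w).const_mul 4).const_add 1
    |>.add_const (16 * s ^ 2)).congr_deriv ?_
  ring

theorem hasDerivAt_div_peregrineDen_pow {N : ℂ → ℂ} {N' : ℂ} (n : ℕ)
    (hN : HasDerivAt N N' w) (hD : peregrineDen w s ≠ 0) :
    HasDerivAt (fun w => N w / peregrineDen w s ^ n)
      ((N' * peregrineDen w s - 8 * n * w * N w) / peregrineDen w s ^ (n + 1)) w := by
  refine (hN.div (hasDerivAt_peregrineDen_left.fun_pow n) (pow_ne_zero n hD)).congr_deriv ?_
  rcases n with _ | n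
  · simp [hD]
  · field_simp
    push_cast
    ring

theorem hasDerivAt_peregrineDen_right : HasDerivAt (peregrineDen w) (32 * s) s := by
  refine ((hasDerivAt_pow 2 s).const_mul 16 |>.const_add _).congr_deriv ?_
  ring

end

theorem dx_ofReal {f : ℂ → ℝ → ℂ} {f' : ℝ → ℝ → ℂ}
    (h : ∀ ξ t : ℝ, HasDerivAt (fun w => f w t) (f' ξ t) ξ) : dx (fun ξ t => f ξ t) = f' :=
  funext fun ξ => funext fun t => (h ξ t).comp_ofReal.deriv

theorem dx_peregrine : dx peregrine = fun (ξ t : ℝ) =>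
    exp (2 * I * t) * (4 * (1 + 4 * I * t)) * (8 * ξ) / peregrineDen ξ t ^ 2 := by
  refine dx_ofReal (f := fun w t =>
    exp (2 * I * t) * (1 - 4 * (1 + 4 * I * t) / peregrineDen w t)) fun ξ t => ?_
  have hD := peregrineDen_ofReal_ne_zero ξ t
  refine (((hasDerivAt_const _ _).div hasDerivAt_peregrineDen_left hD).const_sub 1
    |>.const_mul _).congr_deriv ?_
  field_simp
  ring

theorem dx_dx_peregrine : dx (dx peregrine) = fun (ξ t : ℝ) =>
    exp (2 * I * t) * (4 * (1 + 4 * I * t)) * (8 * peregrineDen ξ t - 128 * ξ ^ 2)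
      / peregrineDen ξ t ^ 3 := by
  rw [dx_peregrine]
  refine dx_ofReal (f := fun w t => exp (2 * I * t) * (4 * (1 + 4 * I * t)) * (8 * w)
    / peregrineDen w t ^ 2) fun ξ t => ?_
  refine (hasDerivAt_div_peregrineDen_pow 2 (((hasDerivAt_id _).const_mul 8).const_mul _)
    (peregrineDen_ofReal_ne_zero ξ t)).congr_deriv ?_
  push_cast
  ring

theorem dx_dx_dx_peregrine : dx (dx (dx peregrine)) = fun (ξ t : ℝ) =>
    exp (2 * I * t) * (4 * (1 + 4 * I * t)) * (3072 * ξ ^ 3 - 384 * ξ * peregrineDen ξ t)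
      / peregrineDen ξ t ^ 4 := by
  rw [dx_dx_peregrine]
  refine dx_ofReal (f := fun w t => exp (2 * I * t) * (4 * (1 + 4 * I * t))
    * (8 * peregrineDen w t - 128 * w ^ 2) / peregrineDen w t ^ 3) fun ξ t => ?_
  refine (hasDerivAt_div_peregrineDen_pow 3 (((hasDerivAt_peregrineDen_left.const_mul 8).fun_sub
      ((hasDerivAt_pow 2 _).const_mul 128)).const_mul _) (peregrineDen_ofReal_ne_zero ξ t))
    |>.congr_deriv ?_
  push_cast
  ring

theorem dt_peregrine (ξ t : ℝ) : dt peregrine ξ t = exp (2 * I * t) *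
    (2 * I * (1 - 4 * (1 + 4 * I * t) / peregrineDen ξ t)
      - (16 * I * peregrineDen ξ t - 128 * t * (1 + 4 * I * t)) / peregrineDen ξ t ^ 2) := by
  have hnum : HasDerivAt (fun s : ℂ => 4 * (1 + 4 * I * s)) (16 * I) t := by
    refine (((hasDerivAt_id (t : ℂ)).const_mul (4 * I)).const_add 1
      |>.const_mul 4).congr_deriv ?_
    ring
  have hexp : HasDerivAt (fun s : ℂ => exp (2 * I * s)) (exp (2 * I * t) * (2 * I)) t := by
    simpa using ((hasDerivAt_id (t : ℂ)).const_mul (2 * I)).cexp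
  refine (hexp.mul ((hnum.fun_div hasDerivAt_peregrineDen_right
    (peregrineDen_ofReal_ne_zero ξ t)).const_sub 1)).comp_ofReal.deriv.trans ?_
  field_simp
  ring

theorem sq_norm_peregrine (ξ t : ℝ) :
    (‖peregrine ξ t‖ : ℂ) ^ 2
      = ((peregrineDen ξ t - 4) ^ 2 + 256 * t ^ 2) / peregrineDen ξ t ^ 2 := by
  have hD := peregrineDen_ofReal_ne_zero ξ t
  have hexp : ‖exp (2 * I * t)‖ = 1 := by
    rw [show 2 * I * t = ((2 * t : ℝ) : ℂ) * I by push_cast; ring, norm_exp_ofReal_mul_I]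
  have hconj : conj (peregrineDen ξ t) = peregrineDen ξ t := by simp [peregrineDen, map_ofNat]
  rw [peregrine, norm_mul, hexp, one_mul, ← ofReal_pow, Complex.sq_norm, ← mul_conj]
  simp only [hconj, map_sub, map_one, map_div₀, map_mul, map_add, map_ofNat, conj_I, conj_ofReal]
  field_simp
  linear_combination (-256 * (t : ℂ) ^ 2) * I_sq

theorem peregrine_nls (ξ t : ℝ) : nlsOperator peregrine ξ t = 0 := by
  have hD := peregrineDen_ofReal_ne_zero ξ t
  rw [nlsOperator, dt_peregrine, dx_dx_peregrine, sq_norm_peregrine, peregrine]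
  field_simp
  grind [peregrineDen, I_sq]

theorem peregrine_mkdv (ξ t : ℝ) : mkdvOperator peregrine ξ t = 6 * dx peregrine ξ t := by
  have hD := peregrineDen_ofReal_ne_zero ξ t
  rw [mkdvOperator, dx_dx_dx_peregrine, dx_peregrine, sq_norm_peregrine]
  field_simp
  unfold peregrineDen
  ring

theorem φ₁_eq_peregrine (v : ℝ) :
    φ₁ v = fun x t => peregrine (x - (1 / 2 + 6 * v * t)) t := by
  funext x t
  simp only [φ₁, peregrine, peregrineDen]
  push_cast
  ring

/-- The first-order rogue wave `φ₁` satisfies the Hirota equation for every real `v`. -/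
theorem rogueWave1_solves_hirota (v : ℝ) :
    ∀ x t : ℝ,
      I * dt (φ₁ v) x t + dx (dx (φ₁ v)) x t
        + 2 * (‖φ₁ v x t‖ : ℂ)^2 * φ₁ v x t
        + I * v * dx (dx (dx (φ₁ v))) x t
        + 6 * I * v * (‖φ₁ v x t‖ : ℂ)^2 * dx (φ₁ v) x t = 0 := by
  intro x t
  have hframe (t : ℝ) : HasDerivAt (fun t => 1 / 2 + 6 * v * t) (6 * v) t :=
    ((hasDerivAt_id t).const_mul (6 * v)).const_add (1 / 2) |>.congr_deriv (mul_one _)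
  rw [φ₁_eq_peregrine]
  exact hirotaOperator_comp_sub_eq_zero differentiable_uncurry_peregrine hframe
    peregrine_nls peregrine_mkdv x t
end

section
/- If f(x,t) is a real-valued nonvanishing smooth function and g(x,t) is complex-valued smooth, and (f,g) satisfy the bilinear equations (D_x²+2) f·f = 2 g ḡ and (i D_t + D_x² + i v D_x³ + 6 i v D_x) g·f = 0, then u = g/f satisfies i·u_t + u_{xx} + 2(|u|²−1)u + i·v·u_{xxx} + 6·i·v·|u|²·u_x = 0. -/
open Complex
noncomputable def pdx (F : ℝ × ℝ → ℂ) : ℝ × ℝ → ℂ := fun p => fderiv ℝ F p (1, 0)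

lemma hasDerivAt_curry_x (φ : ℝ → ℝ → ℂ)
    (hφ : ContDiff ℝ (⊤ : ℕ∞) (fun p : ℝ × ℝ => φ p.1 p.2)) (x t : ℝ) :
    HasDerivAt (fun y => φ y t) (pdx (fun p : ℝ × ℝ => φ p.1 p.2) (x, t)) x := by
  have h1 : HasDerivAt (fun y : ℝ => ((y, t) : ℝ × ℝ)) ((1 : ℝ), (0 : ℝ)) x :=
    (hasDerivAt_id x).prodMk (hasDerivAt_const x t)
  have h2 : DifferentiableAt ℝ (fun p : ℝ × ℝ => φ p.1 p.2) (x, t) :=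
    (hφ.differentiable (by simp)).differentiableAt
  exact h2.hasFDerivAt.comp_hasDerivAt x h1

lemma contDiff_pdx {F : ℝ × ℝ → ℂ} (hF : ContDiff ℝ (⊤ : ℕ∞) F) : ContDiff ℝ (⊤ : ℕ∞) (pdx F) :=
  (ContinuousLinearMap.apply ℝ ℂ ((1 : ℝ), (0 : ℝ))).contDiff.comp (hF.fderiv_right (by simp))

lemma contDiff_dx (φ : ℝ → ℝ → ℂ)
    (hφ : ContDiff ℝ (⊤ : ℕ∞) (fun p : ℝ × ℝ => φ p.1 p.2)) :
    ContDiff ℝ (⊤ : ℕ∞) (fun p : ℝ × ℝ => dx φ p.1 p.2) := by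
  have h : (fun p : ℝ × ℝ => dx φ p.1 p.2) = pdx (fun p : ℝ × ℝ => φ p.1 p.2) := by
    funext p
    have := (hasDerivAt_curry_x φ hφ p.1 p.2).deriv
    simpa [dx] using this
  rw [h]; exact contDiff_pdx hφ

lemma diffAt_x (φ : ℝ → ℝ → ℂ)
    (hφ : ContDiff ℝ (⊤ : ℕ∞) (fun p : ℝ × ℝ => φ p.1 p.2)) (x t : ℝ) :
    DifferentiableAt ℝ (fun y => φ y t) x :=
  ((hφ.differentiable (by simp)).comp
    ((differentiable_id.prodMk (differentiable_const t)))).differentiableAt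

lemma diffAt_t (φ : ℝ → ℝ → ℂ)
    (hφ : ContDiff ℝ (⊤ : ℕ∞) (fun p : ℝ × ℝ => φ p.1 p.2)) (x t : ℝ) :
    DifferentiableAt ℝ (fun s => φ x s) t :=
  ((hφ.differentiable (by simp)).comp
    (((differentiable_const x).prodMk differentiable_id))).differentiableAt
/-- If a real-valued nonvanishing smooth `f` and a smooth complex `g` satisfy the two
Hirota bilinear equations, then `u = g/f` satisfies the gauge-transformed Hirota
equation `i u_t + u_{xx} + 2(|u|²−1)u + i v u_{xxx} + 6 i v |u|² u_x = 0`. -/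
theorem bilinear_implies_hirota (v : ℝ) (f g : ℝ → ℝ → ℂ)
    (hf_smooth : ContDiff ℝ (⊤ : ℕ∞) (fun p : ℝ × ℝ => f p.1 p.2))
    (hg_smooth : ContDiff ℝ (⊤ : ℕ∞) (fun p : ℝ × ℝ => g p.1 p.2))
    (hf_real : ∀ x t : ℝ, (f x t).im = 0)
    (hf_ne : ∀ x t : ℝ, f x t ≠ 0)
    (hbil1 : ∀ x t : ℝ,
      2 * f x t * dx (dx f) x t - 2 * (dx f x t)^2 + 2 * (f x t)^2
        = 2 * g x t * (starRingEnd ℂ) (g x t))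
    (hbil2 : ∀ x t : ℝ,
      I * (dt g x t * f x t - g x t * dt f x t)
      + (dx (dx g) x t * f x t - 2 * dx g x t * dx f x t + g x t * dx (dx f) x t)
      + I * v * (dx (dx (dx g)) x t * f x t - 3 * dx (dx g) x t * dx f x t
          + 3 * dx g x t * dx (dx f) x t - g x t * dx (dx (dx f)) x t)
      + 6 * I * v * (dx g x t * f x t - g x t * dx f x t) = 0) :
    ∀ x t : ℝ,
      let u : ℝ → ℝ → ℂ := fun x t => g x t / f x t
      I * dt u x t + dx (dx u) x t + 2 * ((‖u x t‖ : ℂ)^2 - 1) * u x t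
        + I * v * dx (dx (dx u)) x t
        + 6 * I * v * (‖u x t‖ : ℂ)^2 * dx u x t = 0 := by
  have hfs1 : ContDiff ℝ (⊤ : ℕ∞) (fun p : ℝ × ℝ => dx f p.1 p.2) := contDiff_dx f hf_smooth
  have hfs2 : ContDiff ℝ (⊤ : ℕ∞) (fun p : ℝ × ℝ => dx (dx f) p.1 p.2) := contDiff_dx _ hfs1
  have hgs1 : ContDiff ℝ (⊤ : ℕ∞) (fun p : ℝ × ℝ => dx g p.1 p.2) := contDiff_dx g hg_smooth
  have hgs2 : ContDiff ℝ (⊤ : ℕ∞) (fun p : ℝ × ℝ => dx (dx g) p.1 p.2) := contDiff_dx _ hgs1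
  have Hf : ∀ x t : ℝ, HasDerivAt (fun y => f y t) (dx f x t) x :=
    fun x t => (diffAt_x f hf_smooth x t).hasDerivAt
  have Hg : ∀ x t : ℝ, HasDerivAt (fun y => g y t) (dx g x t) x :=
    fun x t => (diffAt_x g hg_smooth x t).hasDerivAt
  have Hf1 : ∀ x t : ℝ, HasDerivAt (fun y => dx f y t) (dx (dx f) x t) x :=
    fun x t => (diffAt_x _ hfs1 x t).hasDerivAt
  have Hg1 : ∀ x t : ℝ, HasDerivAt (fun y => dx g y t) (dx (dx g) x t) x :=
    fun x t => (diffAt_x _ hgs1 x t).hasDerivAt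
  have Hf2 : ∀ x t : ℝ, HasDerivAt (fun y => dx (dx f) y t) (dx (dx (dx f)) x t) x :=
    fun x t => (diffAt_x _ hfs2 x t).hasDerivAt
  have Hg2 : ∀ x t : ℝ, HasDerivAt (fun y => dx (dx g) y t) (dx (dx (dx g)) x t) x :=
    fun x t => (diffAt_x _ hgs2 x t).hasDerivAt
  have Hft : ∀ x t : ℝ, HasDerivAt (fun s => f x s) (dt f x t) t :=
    fun x t => (diffAt_t f hf_smooth x t).hasDerivAt
  have Hgt : ∀ x t : ℝ, HasDerivAt (fun s => g x s) (dt g x t) t :=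
    fun x t => (diffAt_t g hg_smooth x t).hasDerivAt
  intro x t u
  -- first x-derivative of u, division form, at all points
  have hu1 : ∀ y s : ℝ, dx u y s
      = (dx g y s * f y s - g y s * dx f y s) / (f y s * f y s) := by
    intro y s
    have h := ((Hg y s).div (Hf y s) (hf_ne y s)).deriv
    rw [pow_two] at h
    exact h
  -- second derivative
  have hu2 : ∀ y s : ℝ, dx (dx u) y s
      = (dx (dx g) y s * (f y s * f y s) - 2 * dx g y s * dx f y s * f y s
        - g y s * f y s * dx (dx f) y s + 2 * g y s * (dx f y s * dx f y s))
        / (f y s * (f y s * f y s)) := by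
    intro y s
    have hfun : (fun z => dx u z s)
        = fun z => (dx g z s * f z s - g z s * dx f z s) / (f z s * f z s) :=
      funext fun z => hu1 z s
    have Hnum := ((Hg1 y s).mul (Hf y s)).sub ((Hg y s).mul (Hf1 y s))
    have Hden := (Hf y s).mul (Hf y s)
    have H := Hnum.div Hden (by exact mul_ne_zero (hf_ne y s) (hf_ne y s))
    rw [show dx (dx u) y s = deriv (fun z => dx u z s) y from rfl, hfun,
      (show HasDerivAt (fun z => (dx g z s * f z s - g z s * dx f z s) / (f z s * f z s)) _ y
        from H).deriv]
    simp only [Pi.mul_apply, Pi.sub_apply, Pi.add_apply]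
    have hne := hf_ne y s
    field_simp
    ring
  -- third derivative, in multiplied form
  have hu3 : dx (dx (dx u)) x t * (f x t)^4
      = (dx (dx (dx g)) x t * f x t - 3 * dx (dx g) x t * dx f x t
          + 3 * dx g x t * dx (dx f) x t - g x t * dx (dx (dx f)) x t) * (f x t)^2
        - 6 * (dx g x t * f x t - g x t * dx f x t)
            * (f x t * dx (dx f) x t - (dx f x t)^2) := by
    have hfun : (fun z => dx (dx u) z t)
        = fun z => (dx (dx g) z t * (f z t * f z t) - 2 * dx g z t * dx f z t * f z t
          - g z t * f z t * dx (dx f) z t + 2 * g z t * (dx f z t * dx f z t))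
          / (f z t * (f z t * f z t)) :=
      funext fun z => hu2 z t
    have Ha1 := (Hg2 x t).mul ((Hf x t).mul (Hf x t))
    have Ha2 := (((Hg1 x t).const_mul (2:ℂ)).mul (Hf1 x t)).mul (Hf x t)
    have Ha3 := ((Hg x t).mul (Hf x t)).mul (Hf2 x t)
    have Ha4 := ((Hg x t).const_mul (2:ℂ)).mul ((Hf1 x t).mul (Hf1 x t))
    have Hnum := ((Ha1.sub Ha2).sub Ha3).add Ha4
    have Hden := (Hf x t).mul ((Hf x t).mul (Hf x t))
    have H := Hnum.div Hden
      (by exact mul_ne_zero (hf_ne x t) (mul_ne_zero (hf_ne x t) (hf_ne x t)))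
    rw [show dx (dx (dx u)) x t = deriv (fun z => dx (dx u) z t) x from rfl, hfun,
      (show HasDerivAt (fun z => (dx (dx g) z t * (f z t * f z t) - 2 * dx g z t * dx f z t * f z t
        - g z t * f z t * dx (dx f) z t + 2 * g z t * (dx f z t * dx f z t))
        / (f z t * (f z t * f z t))) _ x from H).deriv]
    simp only [Pi.mul_apply, Pi.sub_apply, Pi.add_apply]
    have hne := hf_ne x t
    field_simp
    ring
  -- time derivative
  have ht : dt u x t * (f x t)^2 = dt g x t * f x t - g x t * dt f x t := by
    have hd : dt u x t = (dt g x t * f x t - g x t * dt f x t) / (f x t)^2 :=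
      ((Hgt x t).div (Hft x t) (hf_ne x t)).deriv
    rw [hd]
    exact div_mul_cancel₀ _ (pow_ne_zero 2 (hf_ne x t))
  -- u itself
  have h0 : u x t * f x t = g x t := by
    show g x t / f x t * f x t = g x t
    exact div_mul_cancel₀ _ (hf_ne x t)
  -- modulus squared
  have ha : ((‖u x t‖ : ℂ))^2 * (f x t)^2
      = g x t * (starRingEnd ℂ) (g x t) := by
    have hcf : (starRingEnd ℂ) (f x t) = f x t :=
      Complex.conj_eq_iff_im.mpr (hf_real x t)
    have h1 : ((‖u x t‖ : ℂ))^2 = u x t * (starRingEnd ℂ) (u x t) := by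
      rw [← Complex.ofReal_pow, Complex.sq_norm, Complex.mul_conj]
    rw [h1]
    show g x t / f x t * (starRingEnd ℂ) (g x t / f x t) * (f x t)^2 = _
    rw [map_div₀, hcf, div_mul_div_comm, pow_two]
    exact div_mul_cancel₀ _ (mul_ne_zero (hf_ne x t) (hf_ne x t))
  -- multiplied forms of first and second derivatives
  have h1' : dx u x t * (f x t)^2 = dx g x t * f x t - g x t * dx f x t := by
    rw [hu1 x t, show f x t * f x t = f x t ^ 2 from (pow_two _).symm]
    exact div_mul_cancel₀ _ (pow_ne_zero 2 (hf_ne x t))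
  have h2' : dx (dx u) x t * (f x t)^3
      = dx (dx g) x t * (f x t * f x t) - 2 * dx g x t * dx f x t * f x t
        - g x t * f x t * dx (dx f) x t + 2 * g x t * (dx f x t * dx f x t) := by
    rw [hu2 x t, show f x t * (f x t * f x t) = f x t ^ 3 from by ring]
    exact div_mul_cancel₀ _ (pow_ne_zero 3 (hf_ne x t))
  have key : (I * dt u x t + dx (dx u) x t
      + 2 * ((‖u x t‖ : ℂ)^2 - 1) * u x t
      + I * v * dx (dx (dx u)) x t
      + 6 * I * v * (‖u x t‖ : ℂ)^2 * dx u x t) * (f x t)^4 = 0 := by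
    linear_combination (I * (f x t)^2) * ht + (f x t) * h2' + (I * v) * hu3
      + (6 * I * v * g x t * (starRingEnd ℂ) (g x t)) * h1'
      + (2 * g x t * (starRingEnd ℂ) (g x t) * f x t - 2 * (f x t)^3) * h0
      + (2 * u x t * (f x t)^2 + 6 * I * v * dx u x t * (f x t)^2) * ha
      + (-(g x t) * f x t - 3 * I * v * (dx g x t * f x t - g x t * dx f x t)) * hbil1 x t
      + ((f x t)^2) * hbil2 x t
  exact (mul_eq_zero.mp key).resolve_right (pow_ne_zero 4 (hf_ne x t))
end
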